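/- Let $\alpha > 1$, consider dimension $d = 1$, and let $\nu > 0$ and $\epsilon > 0$. Then $\lim_{\rho \to \infty} \int_{\{\theta \in \mathbb{R} : |\theta| > \epsilon\, \rho^{1/(3\alpha)}\}} \exp\Bigl\{ -\nu \int_{\mathbb{R}} \bigl( 1 - \cos\bigl(\theta\, \rho^{\frac{2\alpha-1}{2\alpha}}\, \hat v(y)\bigr) \bigr)\, e^{-\rho\,\hat v(y)}\,\mathrm{d}y \Bigr\}\,\mathrm{d}\theta = 0$. -/

import Mathlib

/-!
Write `β = (2α - 1)/(2α)`. The inner integral, restricted to a window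
`a^{1/α} ≤ y ≤ (2a)^{1/α}` on which `v̂(y) ≍ 1/a`, the cosine argument is at most `1` and
`ρ v̂(y) ≤ 1`, is at least a constant times `θ²` when `|θ| ≤ ρ^{1/(2α)}` (take `a = ρ`) and at
least a constant times `|θ|^{1/α}` otherwise (take `a = |θ| ρ^β`). So for `ρ ≥ 1` the outer
integrand is dominated by `C exp(-c |θ|^{1/α})`, which is integrable, while the domain of
integration escapes to infinity: dominated convergence concludes.
-/

open MeasureTheory Real Filter

/-- The shape function on `ℝ`: `v̂(y) = min(|y|^{-α}, 1)`, with `v̂(0) = 1`. -/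
noncomputable def hatv1 (α : ℝ) (y : ℝ) : ℝ :=
  if y = 0 then 1 else min (|y| ^ (-α)) 1

open Set

lemma hatv1_nonneg (α y : ℝ) : 0 ≤ hatv1 α y := by
  unfold hatv1
  split_ifs
  exacts [zero_le_one, le_min (rpow_nonneg (abs_nonneg y) _) zero_le_one]

lemma hatv1_le_one (α y : ℝ) : hatv1 α y ≤ 1 := by
  unfold hatv1
  split_ifs
  exacts [le_rfl, min_le_right _ _]

lemma hatv1_of_one_le_abs {α y : ℝ} (hα : 0 ≤ α) (hy : 1 ≤ |y|) : hatv1 α y = |y| ^ (-α) := by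
  have hy0 : y ≠ 0 := abs_pos.mp (one_pos.trans_le hy)
  rw [hatv1, if_neg hy0, min_eq_left (rpow_le_one_of_one_le_of_nonpos hy (neg_nonpos.mpr hα))]

lemma measurable_hatv1 (α : ℝ) : Measurable (hatv1 α) :=
  Measurable.ite (measurableSet_singleton 0) measurable_const
    ((measurable_abs.pow_const _).min measurable_const)

lemma hatv1_le_two_rpow_mul_one_add_abs_rpow {α : ℝ} (hα : 0 ≤ α) (y : ℝ) :
    hatv1 α y ≤ 2 ^ α * (1 + |y|) ^ (-α) := by
  have h1y : 0 < 1 + |y| := by positivity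
  rw [rpow_neg h1y.le, ← div_eq_mul_inv, ← div_rpow zero_le_two h1y.le]
  rcases le_or_gt |y| 1 with hy | hy
  · exact (hatv1_le_one α y).trans
      (one_le_rpow ((one_le_div h1y).mpr (by linarith)) hα)
  · rw [hatv1_of_one_le_abs hα hy.le, rpow_neg (abs_nonneg y), ← inv_rpow (abs_nonneg y)]
    refine rpow_le_rpow (by positivity) ?_ hα
    rw [inv_eq_one_div, div_le_div_iff₀ (by linarith) h1y]
    linarith

lemma integrable_hatv1 {α : ℝ} (hα : 1 < α) : Integrable (hatv1 α) := by
  refine ((integrable_one_add_norm (E := ℝ) (μ := volume) (r := α) (by simpa)).const_mul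
    (2 ^ α)).mono' (measurable_hatv1 α).aestronglyMeasurable (ae_of_all _ fun y => ?_)
  rw [norm_of_nonneg (hatv1_nonneg α y), norm_eq_abs]
  exact hatv1_le_two_rpow_mul_one_add_abs_rpow (by linarith) y

lemma integrable_exp_neg_mul_abs_rpow {b p : ℝ} (hb : 0 < b) (hp : 0 < p) :
    Integrable fun x : ℝ => exp (-b * |x| ^ p) := by
  have := (integrable_fun_norm_addHaar volume (E := ℝ) (f := fun y => exp (-b * y ^ p))).2
  simp only [Module.finrank_self, tsub_self, pow_zero, one_smul] at this
  refine this ?_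
  simpa using integrableOn_rpow_mul_exp_neg_mul_rpow (s := 0) (by norm_num) hp hb

lemma sq_div_eight_le_one_sub_cos {x : ℝ} (hx : |x| ≤ π) : x ^ 2 / 8 ≤ 1 - cos x := by
  have hπ : π ^ 2 ≤ 16 := by nlinarith [pi_le_four, pi_pos]
  have : x ^ 2 / 8 ≤ 2 / π ^ 2 * x ^ 2 := by
    rw [div_mul_eq_mul_div, div_le_div_iff₀ (by norm_num) (by positivity)]
    nlinarith [sq_nonneg x]
  linarith [cos_le_one_sub_mul_cos_sq hx]

noncomputable def charExponent (α t ρ : ℝ) : ℝ :=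
  ∫ y, (1 - cos (t * hatv1 α y)) * exp (-(ρ * hatv1 α y))

lemma integrable_charExponent_integrand {α : ℝ} (hα : 1 < α) (t : ℝ) {ρ : ℝ} (hρ : 0 ≤ ρ) :
    Integrable fun y => (1 - cos (t * hatv1 α y)) * exp (-(ρ * hatv1 α y)) := by
  have hv := measurable_hatv1 α
  refine ((integrable_hatv1 hα).const_mul (t ^ 2 / 2)).mono'
    (by fun_prop) (ae_of_all _ fun y => ?_)
  have hv0 := hatv1_nonneg α y
  have hcos : 0 ≤ 1 - cos (t * hatv1 α y) := sub_nonneg.mpr (cos_le_one _)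
  rw [norm_of_nonneg (mul_nonneg hcos (exp_pos _).le)]
  calc (1 - cos (t * hatv1 α y)) * exp (-(ρ * hatv1 α y))
      ≤ (t * hatv1 α y) ^ 2 / 2 * 1 := by
        gcongr
        · linarith [one_sub_sq_div_two_le_cos (x := t * hatv1 α y)]
        · exact exp_le_one_iff.mpr (neg_nonpos.mpr (by positivity))
    _ = t ^ 2 / 2 * (hatv1 α y * hatv1 α y) := by ring
    _ ≤ t ^ 2 / 2 * hatv1 α y := by
        gcongr; exact mul_le_of_le_one_left hv0 (hatv1_le_one α y)

lemma hatv1_mem_Icc_of_mem_Icc {α a y : ℝ} (hα : 0 < α) (ha : 1 ≤ a)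
    (hy : y ∈ Icc (a ^ α⁻¹) ((2 * a) ^ α⁻¹)) : hatv1 α y ∈ Icc (2 * a)⁻¹ a⁻¹ := by
  have hinv : ∀ b : ℝ, 0 < b → (b ^ α⁻¹) ^ (-α) = b⁻¹ := fun b hb => by
    rw [← rpow_mul hb.le, inv_mul_eq_div, neg_div_self hα.ne', rpow_neg_one]
  have hy1 : 1 ≤ y := (one_le_rpow ha (inv_nonneg.mpr hα.le)).trans hy.1
  have hy0 : 0 < y := one_pos.trans_le hy1
  rw [hatv1_of_one_le_abs hα.le (by rwa [abs_of_pos hy0]), abs_of_pos hy0]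
  constructor
  · rw [← hinv (2 * a) (by positivity)]
    exact rpow_le_rpow_of_nonpos hy0 hy.2 (by linarith)
  · rw [← hinv a (by positivity)]
    exact rpow_le_rpow_of_nonpos (by positivity) hy.1 (by linarith)

lemma sq_div_le_one_sub_cos_mul_exp {a c ρ v : ℝ} (ha : 0 < a) (hρ0 : 0 ≤ ρ) (hρ : ρ ≤ a)
    (hc : |c| ≤ a) (hv : v ∈ Icc (2 * a)⁻¹ a⁻¹) :
    c ^ 2 / (32 * exp 1 * a ^ 2) ≤ (1 - cos (c * v)) * exp (-(ρ * v)) := by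
  have hv0 : 0 < v := lt_of_lt_of_le (by positivity) hv.1
  have hav : a * v ≤ 1 := (le_div_iff₀' ha).mp (by rw [one_div]; exact hv.2)
  have harg : |c * v| ≤ π := by
    rw [abs_mul, abs_of_pos hv0]
    nlinarith [pi_gt_three]
  have hexp : exp (-1) ≤ exp (-(ρ * v)) := exp_le_exp.mpr (by nlinarith)
  have hsq : c ^ 2 / (4 * a ^ 2) ≤ (c * v) ^ 2 := by
    have h2av : 1 ≤ 2 * a * v := (div_le_iff₀' (by positivity)).mp (by rw [one_div]; exact hv.1)
    rw [div_le_iff₀ (by positivity)]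
    nlinarith [mul_nonneg (sq_nonneg c) (by nlinarith : 0 ≤ (2 * a * v) ^ 2 - 1)]
  calc c ^ 2 / (32 * exp 1 * a ^ 2) = c ^ 2 / (4 * a ^ 2) / 8 * exp (-1) := by
        rw [exp_neg]; field_simp; ring
    _ ≤ (c * v) ^ 2 / 8 * exp (-(ρ * v)) := by gcongr
    _ ≤ (1 - cos (c * v)) * exp (-(ρ * v)) := by gcongr; exact sq_div_eight_le_one_sub_cos harg

noncomputable def charExponentConst (α : ℝ) : ℝ := (2 ^ α⁻¹ - 1) / (32 * exp 1)

lemma charExponentConst_pos {α : ℝ} (hα : 0 < α) : 0 < charExponentConst α :=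
  div_pos (sub_pos.mpr (one_lt_rpow one_lt_two (inv_pos.mpr hα))) (by positivity)

lemma mul_rpow_le_charExponent {α a c ρ : ℝ} (hα : 1 < α) (ha : 1 ≤ a) (hρ0 : 0 ≤ ρ)
    (hρ : ρ ≤ a) (hc : |c| ≤ a) :
    charExponentConst α * (c ^ 2 * a ^ (α⁻¹ - 2)) ≤ charExponent α c ρ := by
  have hα0 : 0 < α := one_pos.trans hα
  have ha0 : 0 < a := one_pos.trans_le ha
  have hint := integrable_charExponent_integrand hα c hρ0
  have hW : a ^ α⁻¹ ≤ (2 * a) ^ α⁻¹ := rpow_le_rpow ha0.le (by linarith) (by positivity)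
  calc charExponentConst α * (c ^ 2 * a ^ (α⁻¹ - 2))
      = c ^ 2 / (32 * exp 1 * a ^ 2) * ((2 * a) ^ α⁻¹ - a ^ α⁻¹) := by
        rw [charExponentConst, mul_rpow zero_le_two ha0.le, rpow_sub ha0, rpow_two]
        field_simp
    _ = c ^ 2 / (32 * exp 1 * a ^ 2) * volume.real (Icc (a ^ α⁻¹) ((2 * a) ^ α⁻¹)) := by
        rw [volume_real_Icc_of_le hW]
    _ ≤ ∫ y in Icc (a ^ α⁻¹) ((2 * a) ^ α⁻¹),
          (1 - cos (c * hatv1 α y)) * exp (-(ρ * hatv1 α y)) :=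
        setIntegral_ge_of_const_le_real measurableSet_Icc measure_Icc_lt_top.ne
          (fun y hy => sq_div_le_one_sub_cos_mul_exp ha0 hρ0 hρ hc
            (hatv1_mem_Icc_of_mem_Icc hα0 ha hy)) hint.integrableOn
    _ ≤ charExponent α c ρ :=
        setIntegral_le_integral hint (ae_of_all _ fun y =>
          mul_nonneg (sub_nonneg.mpr (cos_le_one _)) (exp_pos _).le)

lemma sq_le_charExponent {α ρ θ : ℝ} (hα : 1 < α) (hρ : 1 ≤ ρ) (hθ : |θ| ≤ ρ ^ (1 / (2 * α))) :
    charExponentConst α * θ ^ 2 ≤ charExponent α (θ * ρ ^ ((2 * α - 1) / (2 * α))) ρ := by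
  have hα0 : 0 < α := one_pos.trans hα
  have hρ0 : 0 < ρ := one_pos.trans_le hρ
  set β := (2 * α - 1) / (2 * α) with hβ
  have hc : |θ * ρ ^ β| ≤ ρ := by
    calc |θ * ρ ^ β| = |θ| * ρ ^ β := by rw [abs_mul, abs_of_pos (rpow_pos_of_pos hρ0 β)]
      _ ≤ ρ ^ (1 / (2 * α)) * ρ ^ β := by gcongr
      _ = ρ := by rw [← rpow_add hρ0, show 1 / (2 * α) + β = 1 by rw [hβ]; field_simp; ring,
        rpow_one]
  have hexp : (θ * ρ ^ β) ^ 2 * ρ ^ (α⁻¹ - 2) = θ ^ 2 := by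
    rw [mul_pow, ← rpow_natCast (ρ ^ β), ← rpow_mul hρ0.le, mul_assoc, ← rpow_add hρ0,
      show β * (2 : ℕ) + (α⁻¹ - 2) = 0 by rw [hβ]; push_cast; field_simp; ring, rpow_zero, mul_one]
  simpa only [hexp] using mul_rpow_le_charExponent hα hρ hρ0.le le_rfl hc

lemma rpow_le_charExponent {α ρ θ : ℝ} (hα : 1 < α) (hρ : 1 ≤ ρ) (hθ : ρ ^ (1 / (2 * α)) < |θ|) :
    charExponentConst α * |θ| ^ α⁻¹ ≤ charExponent α (θ * ρ ^ ((2 * α - 1) / (2 * α))) ρ := by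
  have hα0 : 0 < α := one_pos.trans hα
  have hρ0 : 0 < ρ := one_pos.trans_le hρ
  set β := (2 * α - 1) / (2 * α) with hβ
  have hρβ : 1 ≤ ρ ^ β := one_le_rpow hρ (div_nonneg (by linarith) (by linarith))
  set a := |θ * ρ ^ β| with ha_def
  have ha : a = |θ| * ρ ^ β := by rw [ha_def, abs_mul, abs_of_pos (rpow_pos_of_pos hρ0 β)]
  have hρa : ρ ≤ a := by
    calc ρ = ρ ^ (1 / (2 * α)) * ρ ^ β := by
          rw [← rpow_add hρ0, show 1 / (2 * α) + β = 1 by rw [hβ]; field_simp; ring, rpow_one]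
      _ ≤ a := by rw [ha]; gcongr
  have ha0 : 0 < a := hρ0.trans_le hρa
  have hexp : (θ * ρ ^ β) ^ 2 * a ^ (α⁻¹ - 2) = a ^ α⁻¹ := by
    rw [← sq_abs, ← ha_def, rpow_sub ha0, rpow_two]
    field_simp
  calc charExponentConst α * |θ| ^ α⁻¹ ≤ charExponentConst α * a ^ α⁻¹ := by
        gcongr
        · exact (charExponentConst_pos hα0).le
        · rw [ha]; exact le_mul_of_one_le_right (abs_nonneg θ) hρβ
    _ ≤ charExponent α (θ * ρ ^ β) ρ := by
        simpa only [hexp] using mul_rpow_le_charExponent hα (hρ.trans hρa) hρ0.le hρa le_rfl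

lemma charExponentConst_mul_rpow_sub_one_le {α ρ : ℝ} (hα : 1 < α) (hρ : 1 ≤ ρ) (θ : ℝ) :
    charExponentConst α * (|θ| ^ α⁻¹ - 1) ≤
      charExponent α (θ * ρ ^ ((2 * α - 1) / (2 * α))) ρ := by
  have hk := (charExponentConst_pos (one_pos.trans hα)).le
  rcases le_or_gt |θ| (ρ ^ (1 / (2 * α))) with hθ | hθ
  · refine le_trans ?_ (sq_le_charExponent hα hρ hθ)
    gcongr
    rcases le_or_gt |θ| 1 with hθ1 | hθ1
    · linarith [rpow_le_one (abs_nonneg θ) hθ1 (inv_nonneg.mpr (one_pos.trans hα).le),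
        sq_nonneg θ]
    · calc |θ| ^ α⁻¹ - 1 ≤ |θ| ^ (2 : ℝ) := by
            linarith [rpow_le_rpow_of_exponent_le hθ1.le
              (show α⁻¹ ≤ 2 by linarith [inv_lt_one_of_one_lt₀ hα])]
        _ = θ ^ 2 := by rw [rpow_two, sq_abs]
  · exact le_trans (by gcongr; linarith) (rpow_le_charExponent hα hρ hθ)

lemma measurable_charExponent (α ρ : ℝ) : Measurable fun t => charExponent α t ρ := by
  have hv : Measurable fun p : ℝ × ℝ => hatv1 α p.2 := (measurable_hatv1 α).comp measurable_snd
  have : StronglyMeasurable fun p : ℝ × ℝ =>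
      (1 - cos (p.1 * hatv1 α p.2)) * exp (-(ρ * hatv1 α p.2)) :=
    (measurable_const.sub (measurable_fst.mul hv).cos).mul
      (hv.const_mul ρ).neg.exp |>.stronglyMeasurable
  exact this.integral_prod_right'.measurable

lemma tendsto_setIntegral_lt_abs_of_dominated {E ι : Type*} [NormedAddCommGroup E]
    [NormedSpace ℝ E] {l : Filter ι} [l.IsCountablyGenerated] {μ : Measure ℝ} {F : ι → ℝ → E}
    {R : ι → ℝ} {g : ℝ → ℝ} (hR : Tendsto R l atTop) (hF : ∀ i, AEStronglyMeasurable (F i) μ)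
    (hg : Integrable g μ) (hbound : ∀ᶠ i in l, ∀ θ, ‖F i θ‖ ≤ g θ) :
    Tendsto (fun i => ∫ θ in {θ | R i < |θ|}, F i θ ∂μ) l (nhds 0) := by
  have hS : ∀ i, MeasurableSet {θ : ℝ | R i < |θ|} :=
    fun i => measurableSet_lt measurable_const measurable_abs
  simp_rw [← integral_indicator (hS _)]
  simpa using tendsto_integral_filter_of_dominated_convergence g (f := fun _ => 0)
    (.of_forall fun i => (hF i).indicator (hS i))
    (hbound.mono fun i h => ae_of_all _ fun θ => (norm_indicator_le_norm_self _ _).trans (h θ))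
    hg (ae_of_all _ fun θ => tendsto_const_nhds.congr' <|
      (hR.eventually_ge_atTop |θ|).mono fun i hi =>
      (indicator_of_notMem (show θ ∉ {θ | R i < |θ|} from not_lt.mpr hi) _).symm)

/-- The modulus of the tilted characteristic function is integrably small outside the
central region: the integral over `{|θ| > ε ρ^{1/(3α)}}` tends to `0` as `ρ → ∞`. -/
theorem stmt15 (α : ℝ) (hα : 1 < α) (ν ε : ℝ) (hν : 0 < ν) (hε : 0 < ε) :
    Filter.Tendsto
      (fun ρ : ℝ =>
        ∫ θ in {θ : ℝ | ε * ρ ^ (1 / (3 * α)) < |θ|},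
          Real.exp (-(ν *
            ∫ y : ℝ, (1 - Real.cos (θ * (ρ ^ ((2 * α - 1) / (2 * α)) * hatv1 α y))) *
              Real.exp (-(ρ * hatv1 α y)))))
      atTop (nhds 0) := by
  have hα0 : 0 < α := one_pos.trans hα
  set k := charExponentConst α
  have hk : 0 < ν * k := mul_pos hν (charExponentConst_pos hα0)
  have hform : ∀ ρ θ : ℝ, ∫ y, (1 - cos (θ * (ρ ^ ((2 * α - 1) / (2 * α)) * hatv1 α y))) *
      exp (-(ρ * hatv1 α y)) = charExponent α (θ * ρ ^ ((2 * α - 1) / (2 * α))) ρ :=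
    fun ρ θ => by simp only [charExponent, mul_assoc]
  simp_rw [hform]
  refine tendsto_setIntegral_lt_abs_of_dominated
    ((tendsto_rpow_atTop (by positivity)).const_mul_atTop hε)
    (fun ρ => ((measurable_charExponent α ρ).comp (measurable_id.mul_const _)).const_mul ν
      |>.neg.exp.aestronglyMeasurable)
    ((integrable_exp_neg_mul_abs_rpow hk (inv_pos.mpr hα0)).const_mul (exp (ν * k))) ?_
  filter_upwards [eventually_ge_atTop 1] with ρ hρ θ
  rw [norm_of_nonneg (exp_pos _).le, ← exp_add, exp_le_exp]
  have := mul_le_mul_of_nonneg_left (charExponentConst_mul_rpow_sub_one_le hα hρ θ) hν.le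
  linarith
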